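/- arXiv:1110.1861 — 4 statements merged into one kernel-verified Lean document; each statement's English description precedes it below -/
import Mathlib

section
/- Let K be a field and c ∈ ℤⁿ with c⁺ ≠ 0 and c⁻ ≠ 0 (so the ℤⁿ/ℤc-grading of S = K[x₁,…,xₙ] is positive). Let I ⊆ S be an ideal that is homogeneous with respect to the ℤⁿ/ℤc-grading, let ≺ and ≺' be term orders with x^{c⁺} ≺ x^{c⁻} and x^{c⁺} ≻' x^{c⁻}, and set M = in_≺(I) and N = in_{≺'}(I) (these are monomial ideals). Then there exists an arrow map f : Mon(M) → Mon(N) with respect to the ℤⁿ/ℤc-grading and the term order ≺. -/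
open MvPolynomial

/-- A term order on the monomial exponents of `K[x₁,…,xₙ]`: a strict total order on
`Fin n →₀ ℕ` with `0` smallest and compatible with addition. -/
def IsTermOrder (n : ℕ) (lt : (Fin n →₀ ℕ) → (Fin n →₀ ℕ) → Prop) : Prop :=
  (∀ u v : Fin n →₀ ℕ, lt u v ∨ u = v ∨ lt v u) ∧
  (∀ u v w : Fin n →₀ ℕ, lt u v → lt v w → lt u w) ∧
  (∀ u : Fin n →₀ ℕ, ¬ lt u u) ∧
  (∀ u : Fin n →₀ ℕ, u ≠ 0 → lt 0 u) ∧
  (∀ u v w : Fin n →₀ ℕ, lt u v → lt (u + w) (v + w))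

/-- `u` is the exponent of the `lt`-leading monomial `in_≺(f)` of `f`. -/
def IsLeadExp {n : ℕ} {K : Type*} [Field K] (lt : (Fin n →₀ ℕ) → (Fin n →₀ ℕ) → Prop)
    (f : MvPolynomial (Fin n) K) (u : Fin n →₀ ℕ) : Prop :=
  u ∈ f.support ∧ ∀ v ∈ f.support, v ≠ u → lt v u

/-- The initial ideal `in_≺(I)`, generated by the leading monomials of nonzero elements. -/
noncomputable def initialIdeal {n : ℕ} {K : Type*} [Field K]
    (lt : (Fin n →₀ ℕ) → (Fin n →₀ ℕ) → Prop) (I : Ideal (MvPolynomial (Fin n) K)) :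
    Ideal (MvPolynomial (Fin n) K) :=
  Ideal.span { p | ∃ f ∈ I, ∃ u, IsLeadExp lt f u ∧ p = monomial u 1 }

/-- `DistRel c u v ℓ` says that `u - v = ℓ·c` in `ℤⁿ`; then `d(x^u, x^v) = |ℓ|`. -/
def DistRel {n : ℕ} (c : Fin n → ℤ) (u v : Fin n →₀ ℕ) (ℓ : ℤ) : Prop :=
  ∀ i, (u i : ℤ) - (v i : ℤ) = ℓ * c i

/-- Two monomials have the same degree in the `ℤⁿ/ℤc`-grading iff `u - v ∈ ℤc`. -/
def SameDeg {n : ℕ} (c : Fin n → ℤ) (u v : Fin n →₀ ℕ) : Prop :=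
  ∃ ℓ : ℤ, DistRel c u v ℓ

/-- A polynomial is homogeneous for the `ℤⁿ/ℤc`-grading if all of its monomials
have the same degree. -/
def CHom {n : ℕ} {K : Type*} [Field K] (c : Fin n → ℤ) (f : MvPolynomial (Fin n) K) : Prop :=
  ∀ u ∈ f.support, ∀ v ∈ f.support, SameDeg c u v

/-- An ideal is homogeneous for the `ℤⁿ/ℤc`-grading if it is generated by homogeneous
elements. -/
def CHomIdeal {n : ℕ} {K : Type*} [Field K] (c : Fin n → ℤ)
    (I : Ideal (MvPolynomial (Fin n) K)) : Prop :=
  ∃ G : Set (MvPolynomial (Fin n) K), (∀ g ∈ G, CHom c g) ∧ I = Ideal.span G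

/-- The exponent vector `c⁺` of a vector `c ∈ ℤⁿ`. -/
noncomputable def cpos {n : ℕ} (c : Fin n → ℤ) : Fin n →₀ ℕ :=
  Finsupp.equivFunOnFinite.symm fun i => (c i).toNat

/-- The exponent vector `c⁻` of a vector `c ∈ ℤⁿ`. -/
noncomputable def cneg {n : ℕ} (c : Fin n → ℤ) : Fin n →₀ ℕ :=
  Finsupp.equivFunOnFinite.symm fun i => (-(c i)).toNat

/-- `Mon M`: the set of (exponents of) monomials lying in `M`. -/
def Mon {n : ℕ} {K : Type*} [Field K] (M : Ideal (MvPolynomial (Fin n) K)) :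
    Set (Fin n →₀ ℕ) :=
  { u | monomial u 1 ∈ M }

/-- `f` (as a map on exponent vectors) restricts to an arrow map `Mon M → Mon N`
with respect to the `ℤⁿ/ℤc`-grading and the term order `lt`:
(1) it is a degree-preserving bijection with `m ⪰ f(m)`;
(2) `d(m', f(m')) ≤ d(m, f(m))` for every multiple `m'` of `m ∈ Mon M`;
(3) `d(f⁻¹(m'), m') ≤ d(f⁻¹(m), m)` for every `m ∈ Mon N` and multiple `m'` of `m`. -/
def IsArrowMap {n : ℕ} {K : Type*} [Field K] (c : Fin n → ℤ)
    (lt : (Fin n →₀ ℕ) → (Fin n →₀ ℕ) → Prop)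
    (M N : Ideal (MvPolynomial (Fin n) K)) (f : (Fin n →₀ ℕ) → (Fin n →₀ ℕ)) : Prop :=
  Set.BijOn f (Mon M) (Mon N) ∧
  (∀ u ∈ Mon M, SameDeg c u (f u)) ∧
  (∀ u ∈ Mon M, f u = u ∨ lt (f u) u) ∧
  (∀ u ∈ Mon M, ∀ (w : Fin n →₀ ℕ) (ℓ ℓ' : ℤ),
    DistRel c u (f u) ℓ → DistRel c (u + w) (f (u + w)) ℓ' → |ℓ'| ≤ |ℓ|) ∧
  (∀ u ∈ Mon M, ∀ u' ∈ Mon M, ∀ (w : Fin n →₀ ℕ) (ℓ ℓ' : ℤ),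
    f u' = f u + w → DistRel c u (f u) ℓ → DistRel c u' (f u') ℓ' → |ℓ'| ≤ |ℓ|)

/-! For `u ∈ Mon (in_≺ I)` consider the elements of `I` that contain `x^u` and are supported on
the segment `u, u + c, …, u + ℓc`. One exists: take a degree component of a multiple of an element
of `I` whose leading monomial divides `x^u`; no monomial `u + jc` with `j < 0` occurs there because
`≺` decreases along `c`. The arrow map sends `u` to `u + γc`, where `γ` (`rayLength c I u`) is the
least such `ℓ`. A minimal element contains `x^{u+γc}`, which is its `≺'`-leading monomial as `≺'`
increases along `c`. Read backwards from `u + γc` along `-c`, the same element has length `γ`, and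
eliminating `x^{u+γc}` between it and a shorter one along `-c` would contradict minimality at `u`;
so the same construction for `-c` is the inverse map and has the same lengths. Multiplying a
witness by a monomial keeps it a witness, so `γ` can only drop on multiples, which gives
conditions (2) and (3). -/

namespace IsTermOrder

variable {n : ℕ} {lt : (Fin n →₀ ℕ) → (Fin n →₀ ℕ) → Prop}

theorem irrefl (hlt : IsTermOrder n lt) (u : Fin n →₀ ℕ) : ¬ lt u u :=
  hlt.2.2.1 u

theorem trans (hlt : IsTermOrder n lt) {u v w : Fin n →₀ ℕ} (huv : lt u v) (hvw : lt v w) :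
    lt u w :=
  hlt.2.1 u v w huv hvw

theorem asymm (hlt : IsTermOrder n lt) {u v : Fin n →₀ ℕ} (h : lt u v) : ¬ lt v u :=
  fun h' => hlt.irrefl u (hlt.trans h h')

theorem add_right (hlt : IsTermOrder n lt) {u v : Fin n →₀ ℕ} (w : Fin n →₀ ℕ) (h : lt u v) :
    lt (u + w) (v + w) :=
  hlt.2.2.2.2 u v w h

theorem add_left (hlt : IsTermOrder n lt) {u v : Fin n →₀ ℕ} (w : Fin n →₀ ℕ) (h : lt u v) :
    lt (w + u) (w + v) := by
  simpa only [add_comm w] using hlt.add_right w h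

theorem lt_of_add_lt_add_right (hlt : IsTermOrder n lt) {u v w : Fin n →₀ ℕ}
    (h : lt (u + w) (v + w)) : lt u v := by
  rcases hlt.1 u v with huv | rfl | hvu
  · exact huv
  · exact absurd h (hlt.irrefl _)
  · exact absurd (hlt.add_right w hvu) (hlt.asymm h)

theorem nsmul_lt_nsmul (hlt : IsTermOrder n lt) {u v : Fin n →₀ ℕ} (h : lt u v) :
    ∀ {k : ℕ}, k ≠ 0 → lt (k • u) (k • v)
  | 1, _ => by simpa using h
  | k + 2, _ => by
    rw [succ_nsmul _ (k + 1), succ_nsmul _ (k + 1)]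
    exact hlt.trans (hlt.add_right u (hlt.nsmul_lt_nsmul h k.succ_ne_zero)) (hlt.add_left _ h)

end IsTermOrder

section Ray

variable {n : ℕ} {c : Fin n → ℤ}

theorem DistRel.symm {x u : Fin n →₀ ℕ} {ℓ : ℤ} (h : DistRel c x u ℓ) : DistRel c u x (-ℓ) :=
  fun i => by linear_combination -h i

theorem DistRel.trans {x y z : Fin n →₀ ℕ} {a b : ℤ} (hxy : DistRel c x y a)
    (hyz : DistRel c y z b) : DistRel c x z (a + b) :=
  fun i => by linear_combination hxy i + hyz i

theorem distRel_zero_iff {x u : Fin n →₀ ℕ} : DistRel c x u 0 ↔ x = u :=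
  ⟨fun h => Finsupp.ext fun i => by have := h i; omega, fun h i => by simp [h]⟩

theorem DistRel.sub {x z u : Fin n →₀ ℕ} {a b : ℤ} (hx : DistRel c x u a) (hz : DistRel c z u b) :
    DistRel c x z (a - b) :=
  fun i => by linear_combination hx i - hz i

theorem DistRel.add_right {x u : Fin n →₀ ℕ} {ℓ : ℤ} (h : DistRel c x u ℓ) (w : Fin n →₀ ℕ) :
    DistRel c (x + w) (u + w) ℓ :=
  fun i => by push_cast [Finsupp.add_apply]; linear_combination h i

theorem distRel_neg_iff {x u : Fin n →₀ ℕ} {ℓ : ℤ} : DistRel (-c) x u ℓ ↔ DistRel c x u (-ℓ) :=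
  forall_congr' fun i => by rw [Pi.neg_apply, mul_neg, neg_mul]

theorem DistRel.left_unique {x y u : Fin n →₀ ℕ} {ℓ : ℤ} (hx : DistRel c x u ℓ)
    (hy : DistRel c y u ℓ) : x = y :=
  Finsupp.ext fun i => by have := hx i; have := hy i; omega

theorem DistRel.unique (hc : c ≠ 0) {x u : Fin n →₀ ℕ} {a b : ℤ} (ha : DistRel c x u a)
    (hb : DistRel c x u b) : a = b := by
  obtain ⟨i, hi⟩ := Function.ne_iff.1 hc
  exact mul_right_cancel₀ hi ((ha i).symm.trans (hb i))

@[simp]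
theorem cpos_apply (i : Fin n) : cpos c i = (c i).toNat := by simp [cpos]

@[simp]
theorem cneg_apply (i : Fin n) : cneg c i = (-c i).toNat := by simp [cneg]

theorem cpos_neg : cpos (-c) = cneg c := rfl

theorem cneg_neg : cneg (-c) = cpos c := by
  ext i; simp

theorem exists_neg_of_cneg_ne_zero (hc : cneg c ≠ 0) : ∃ i, c i < 0 := by
  by_contra! h
  exact hc (Finsupp.ext fun i => by simp [h i])

theorem ne_zero_of_cneg_ne_zero (hc : cneg c ≠ 0) : c ≠ 0 := by
  obtain ⟨i, hi⟩ := exists_neg_of_cneg_ne_zero hc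
  exact Function.ne_iff.2 ⟨i, hi.ne⟩

theorem DistRel.add_smul_cneg_eq_add_smul_cpos {x y : Fin n →₀ ℕ} {m : ℕ} (h : DistRel c y x m) :
    y + m • cneg c = x + m • cpos c :=
  Finsupp.ext fun i => by
    simp only [Finsupp.add_apply, Finsupp.smul_apply, cpos_apply, cneg_apply, smul_eq_mul]
    zify
    linear_combination h i - (m : ℤ) * Int.toNat_sub_toNat_neg (c i)

theorem IsTermOrder.lt_of_distRel {lt : (Fin n →₀ ℕ) → (Fin n →₀ ℕ) → Prop}
    (hlt : IsTermOrder n lt) (hlo : lt (cpos c) (cneg c)) {x y : Fin n →₀ ℕ} {m : ℤ}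
    (h : DistRel c y x m) (hm : 0 < m) : lt y x := by
  lift m to ℕ using hm.le
  have hm : lt (x + m • cpos c) (x + m • cneg c) :=
    hlt.add_left x (hlt.nsmul_lt_nsmul hlo (by exact_mod_cast hm.ne'))
  rw [← h.add_smul_cneg_eq_add_smul_cpos] at hm
  exact hlt.lt_of_add_lt_add_right hm

theorem IsTermOrder.lt_of_distRel_neg {lt : (Fin n →₀ ℕ) → (Fin n →₀ ℕ) → Prop}
    (hlt : IsTermOrder n lt) (hlo : lt (cneg c) (cpos c)) {x y : Fin n →₀ ℕ} {m : ℤ}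
    (h : DistRel c y x m) (hm : m < 0) : lt y x :=
  hlt.lt_of_distRel (c := -c) (by rwa [cpos_neg, cneg_neg])
    (distRel_neg_iff.2 (by rwa [neg_neg])) (neg_pos.2 hm)

end Ray

section Grading

variable {n : ℕ} {K : Type*} [Field K] {c : Fin n → ℤ} {I : Ideal (MvPolynomial (Fin n) K)}

def degWeight (c : Fin n → ℤ) : Fin n → (Fin n → ℤ) ⧸ AddSubgroup.zmultiples c :=
  fun i => QuotientAddGroup.mk (Pi.single i 1)

theorem weight_degWeight (u : Fin n →₀ ℕ) :
    Finsupp.weight (degWeight c) u = QuotientAddGroup.mk fun i => (u i : ℤ) := by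
  conv_rhs => rw [← Finset.univ_sum_single fun i => (u i : ℤ)]
  rw [Finsupp.weight_apply, Finsupp.sum_fintype _ _ (by simp),
    ← QuotientAddGroup.mk'_apply, map_sum]
  refine Finset.sum_congr rfl fun i _ => ?_
  rw [degWeight, ← QuotientAddGroup.mk_nsmul, QuotientAddGroup.mk'_apply, ← Pi.single_smul,
    nsmul_eq_mul, mul_one]

theorem weight_degWeight_eq_iff {x u : Fin n →₀ ℕ} :
    Finsupp.weight (degWeight c) x = Finsupp.weight (degWeight c) u ↔ SameDeg c x u := by
  rw [weight_degWeight, weight_degWeight, QuotientAddGroup.eq_iff_sub_mem,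
    AddSubgroup.mem_zmultiples_iff]
  refine exists_congr fun ℓ => ?_
  rw [DistRel, funext_iff]
  simp [eq_comm]

theorem sameDeg_neg_iff {x u : Fin n →₀ ℕ} : SameDeg (-c) x u ↔ SameDeg c x u :=
  ⟨fun ⟨ℓ, h⟩ => ⟨-ℓ, distRel_neg_iff.1 h⟩,
    fun ⟨ℓ, h⟩ => ⟨-ℓ, distRel_neg_iff.2 (by rwa [neg_neg])⟩⟩

theorem CHomIdeal.neg (hI : CHomIdeal c I) : CHomIdeal (-c) I := by
  obtain ⟨G, hG, rfl⟩ := hI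
  exact ⟨G, fun g hg u hu v hv => sameDeg_neg_iff.2 (hG g hg u hu v hv), rfl⟩

open scoped Classical in
attribute [local instance] MvPolynomial.weightedGradedAlgebra in
theorem CHomIdeal.isHomogeneous (hI : CHomIdeal c I) :
    I.IsHomogeneous (weightedHomogeneousSubmodule K (degWeight c)) := by
  obtain ⟨G, hG, rfl⟩ := hI
  refine Ideal.homogeneous_span _ _ fun g hg => ?_
  obtain hempty | ⟨u, hu⟩ := g.support.eq_empty_or_nonempty
  · exact ⟨0, by simp [support_eq_empty.1 hempty]⟩
  · refine ⟨Finsupp.weight (degWeight c) u, fun x hx => ?_⟩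
    exact weight_degWeight_eq_iff.2 (hG g hg x (mem_support_iff.2 hx) u hu)

theorem CHomIdeal.exists_component (hI : CHomIdeal c I) {f : MvPolynomial (Fin n) K}
    (hf : f ∈ I) (u : Fin n →₀ ℕ) :
    ∃ v ∈ I, coeff u v = coeff u f ∧ ∀ x ∈ v.support, x ∈ f.support ∧ SameDeg c x u := by
  classical
  let := MvPolynomial.weightedGradedAlgebra K (degWeight c)
  refine ⟨weightedHomogeneousComponent (degWeight c) (Finsupp.weight (degWeight c) u) f,
    weightedHomogeneousComponent_mem_of_mem K _ hI.isHomogeneous hf _, ?_, fun x hx => ?_⟩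
  · simp [coeff_weightedHomogeneousComponent]
  · rw [mem_support_iff, coeff_weightedHomogeneousComponent] at hx
    split_ifs at hx with hxu
    · exact ⟨mem_support_iff.2 hx, weight_degWeight_eq_iff.1 hxu⟩
    · exact absurd rfl hx

end Grading

section InitialIdeal

variable {n : ℕ} {K : Type*} [Field K] {lt : (Fin n →₀ ℕ) → (Fin n →₀ ℕ) → Prop}
  {I : Ideal (MvPolynomial (Fin n) K)}

theorem add_mem_Mon {M : Ideal (MvPolynomial (Fin n) K)} {u : Fin n →₀ ℕ} (hu : u ∈ Mon M)
    (w : Fin n →₀ ℕ) : u + w ∈ Mon M := by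
  simpa only [Mon, Set.mem_ofPred_eq, monomial_mul, mul_one] using M.mul_mem_right (monomial w 1) hu

theorem mem_Mon_initialIdeal_iff {u : Fin n →₀ ℕ} :
    u ∈ Mon (initialIdeal lt I) ↔ ∃ f ∈ I, ∃ u', IsLeadExp lt f u' ∧ u' ≤ u := by
  classical
  have hspan : { p | ∃ f ∈ I, ∃ u, IsLeadExp lt f u ∧ p = monomial u (1 : K) } =
      (fun u => monomial u 1) '' { u | ∃ f ∈ I, IsLeadExp lt f u } := by
    ext p
    grind
  rw [Mon, Set.mem_ofPred_eq, initialIdeal, hspan, mem_ideal_span_monomial_image]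
  simp only [support_monomial, one_ne_zero, if_false, Finset.mem_singleton, forall_eq]
  grind

theorem IsLeadExp.mul_monomial {f : MvPolynomial (Fin n) K} {u : Fin n →₀ ℕ}
    (hlt : IsTermOrder n lt) (h : IsLeadExp lt f u) (w : Fin n →₀ ℕ) :
    IsLeadExp lt (f * monomial w 1) (u + w) := by
  classical
  refine ⟨by simpa [coeff_mul_monomial] using h.1, fun x hx hxu => ?_⟩
  obtain ⟨y, hy, z, hz, rfl⟩ := Finset.mem_add.1 (support_mul _ _ hx)
  rw [support_monomial, if_neg one_ne_zero, Finset.mem_singleton] at hz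
  subst hz
  exact hlt.add_right z (h.2 y hy fun hyu => hxu (hyu ▸ rfl))

end InitialIdeal

theorem MvPolynomial.exists_sub_mem_coeff_eq_zero {σ K : Type*} [Field K]
    {J : Ideal (MvPolynomial σ K)} {v v' : MvPolynomial σ K} (hv : v ∈ J) (hv' : v' ∈ J)
    {z : σ →₀ ℕ} (hz : coeff z v' ≠ 0) :
    ∃ w ∈ J, coeff z w = 0 ∧ (∀ x, coeff x v' = 0 → coeff x w = coeff x v) ∧
      ∀ x ∈ w.support, x ∈ v.support ∨ x ∈ v'.support := by
  refine ⟨v - C (coeff z v / coeff z v') * v', J.sub_mem hv (J.mul_mem_left _ hv'), ?_,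
    fun x hx => by simp [hx], fun x hx => ?_⟩
  · simp [div_mul_cancel₀ _ hz]
  · by_contra! h
    simp_all

section Arrow

variable {n : ℕ} {K : Type*} [Field K] {c : Fin n → ℤ} {I : Ideal (MvPolynomial (Fin n) K)}
  {lt lt' : (Fin n →₀ ℕ) → (Fin n →₀ ℕ) → Prop} {u : Fin n →₀ ℕ}

def HasRayElem (c : Fin n → ℤ) (I : Ideal (MvPolynomial (Fin n) K)) (u : Fin n →₀ ℕ)
    (ℓ : ℕ) : Prop :=
  ∃ v ∈ I, coeff u v ≠ 0 ∧ ∀ x ∈ v.support, ∃ j : ℕ, j ≤ ℓ ∧ DistRel c x u j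

noncomputable def rayLength (c : Fin n → ℤ) (I : Ideal (MvPolynomial (Fin n) K))
    (u : Fin n →₀ ℕ) : ℕ :=
  sInf {ℓ | HasRayElem c I u ℓ}

/-- The truncation `toNat` never applies where `arrow` is used: see `distRel_arrow`. -/
noncomputable def arrow (c : Fin n → ℤ) (I : Ideal (MvPolynomial (Fin n) K))
    (u : Fin n →₀ ℕ) : Fin n →₀ ℕ :=
  Finsupp.equivFunOnFinite.symm fun i => ((u i : ℤ) + rayLength c I u * c i).toNat

theorem arrow_eq_of_distRel {z : Fin n →₀ ℕ} (h : DistRel c z u (rayLength c I u)) :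
    arrow c I u = z :=
  Finsupp.ext fun i => by
    rw [arrow, Finsupp.coe_equivFunOnFinite_symm]
    have := h i
    omega

theorem hasRayElem_rayLength (h : ∃ ℓ, HasRayElem c I u ℓ) :
    HasRayElem c I u (rayLength c I u) :=
  Nat.sInf_mem h

theorem rayLength_le {ℓ : ℕ} (h : HasRayElem c I u ℓ) : rayLength c I u ≤ ℓ :=
  Nat.sInf_le h

theorem HasRayElem.add_right {ℓ : ℕ} (h : HasRayElem c I u ℓ) (w : Fin n →₀ ℕ) :
    HasRayElem c I (u + w) ℓ := by
  classical
  obtain ⟨v, hv, hu, hsupp⟩ := h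
  refine ⟨v * monomial w 1, I.mul_mem_right _ hv, by simpa [coeff_mul_monomial], fun x hx => ?_⟩
  obtain ⟨y, hy, z, hz, rfl⟩ := Finset.mem_add.1 (support_mul _ _ hx)
  rw [support_monomial, if_neg one_ne_zero, Finset.mem_singleton] at hz
  obtain ⟨j, hj, hyu⟩ := hsupp y hy
  exact ⟨j, hj, hz ▸ hyu.add_right w⟩

theorem rayLength_add_le (h : ∃ ℓ, HasRayElem c I u ℓ) (w : Fin n →₀ ℕ) :
    rayLength c I (u + w) ≤ rayLength c I u :=
  rayLength_le ((hasRayElem_rayLength h).add_right w)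

theorem IsLeadExp.nonneg_of_distRel (hlt : IsTermOrder n lt) (hlo : lt (cpos c) (cneg c))
    {f : MvPolynomial (Fin n) K} (h : IsLeadExp lt f u) {x : Fin n →₀ ℕ} (hx : x ∈ f.support)
    {m : ℤ} (hxu : DistRel c x u m) : 0 ≤ m := by
  by_contra! hm
  have hux : lt u x := hlt.lt_of_distRel hlo hxu.symm (neg_pos.2 hm)
  rcases eq_or_ne x u with rfl | hne
  · exact hlt.irrefl x hux
  · exact hlt.asymm (h.2 x hx hne) hux

theorem exists_hasRayElem (hlt : IsTermOrder n lt) (hlo : lt (cpos c) (cneg c))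
    (hI : CHomIdeal c I) (hc : cneg c ≠ 0) (hu : u ∈ Mon (initialIdeal lt I)) :
    ∃ ℓ, HasRayElem c I u ℓ := by
  obtain ⟨i₀, hi₀⟩ := exists_neg_of_cneg_ne_zero hc
  obtain ⟨f, hf, u', hlead, hle⟩ := mem_Mon_initialIdeal_iff.1 hu
  have hlead' : IsLeadExp lt (f * monomial (u - u') 1) u := by
    simpa only [add_tsub_cancel_of_le hle] using hlead.mul_monomial hlt (u - u')
  obtain ⟨v, hv, hvu, hsupp⟩ := hI.exists_component (I.mul_mem_right _ hf) u
  refine ⟨u i₀, v, hv, hvu ▸ mem_support_iff.1 hlead'.1, fun x hx => ?_⟩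
  obtain ⟨hxf, m, hxu⟩ := hsupp x hx
  lift m to ℕ using hlead'.nonneg_of_distRel hlt hlo hxf hxu
  refine ⟨m, ?_, hxu⟩
  -- since `c i₀ < 0`, the segment leaves `ℕⁿ` after at most `u i₀` steps
  have := hxu i₀
  zify
  nlinarith

theorem exists_hasRayElem_endpoint (h : ∃ ℓ, HasRayElem c I u ℓ) :
    ∃ v ∈ I, coeff u v ≠ 0 ∧
      (∀ x ∈ v.support, ∃ j : ℕ, j ≤ rayLength c I u ∧ DistRel c x u j) ∧
      ∃ z ∈ v.support, DistRel c z u (rayLength c I u) := by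
  obtain ⟨v, hv, hu, hsupp⟩ := hasRayElem_rayLength h
  refine ⟨v, hv, hu, hsupp, ?_⟩
  by_contra! hno
  have hL : rayLength c I u ≠ 0 := fun hL =>
    hno u (mem_support_iff.2 hu) (by rw [hL, Nat.cast_zero, distRel_zero_iff])
  have : rayLength c I u ≤ rayLength c I u - 1 := rayLength_le ⟨v, hv, hu, fun x hx => ?_⟩
  · omega
  obtain ⟨j, hj, hxu⟩ := hsupp x hx
  have hjL : j ≠ rayLength c I u := fun hjL => hno x hx (hjL ▸ hxu)
  exact ⟨j, by omega, hxu⟩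

theorem distRel_arrow (h : ∃ ℓ, HasRayElem c I u ℓ) :
    DistRel c (arrow c I u) u (rayLength c I u) := by
  obtain ⟨-, -, -, -, z, -, hzu⟩ := exists_hasRayElem_endpoint h
  rwa [arrow_eq_of_distRel hzu]

theorem arrow_mem_Mon_initialIdeal (hlt' : IsTermOrder n lt') (hlo' : lt' (cneg c) (cpos c))
    (h : ∃ ℓ, HasRayElem c I u ℓ) : arrow c I u ∈ Mon (initialIdeal lt' I) := by
  obtain ⟨v, hv, -, hsupp, z, hz, hzu⟩ := exists_hasRayElem_endpoint h
  rw [arrow_eq_of_distRel hzu]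
  refine mem_Mon_initialIdeal_iff.2 ⟨v, hv, z, ⟨hz, fun x hx hxz => ?_⟩, le_rfl⟩
  obtain ⟨j, hj, hxu⟩ := hsupp x hx
  have hjL : j ≠ rayLength c I u := fun hjL => hxz (hxu.left_unique (hjL ▸ hzu))
  exact hlt'.lt_of_distRel_neg hlo' (hxu.sub hzu) (by omega)

theorem arrow_eq_or_lt (hlt : IsTermOrder n lt) (hlo : lt (cpos c) (cneg c))
    (h : ∃ ℓ, HasRayElem c I u ℓ) : arrow c I u = u ∨ lt (arrow c I u) u := by
  rcases Nat.eq_zero_or_pos (rayLength c I u) with hL | hL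
  · exact Or.inl (distRel_zero_iff.1 (by simpa [hL] using distRel_arrow h))
  · exact Or.inr (hlt.lt_of_distRel hlo (distRel_arrow h) (by exact_mod_cast hL))

theorem abs_eq_rayLength (hc : c ≠ 0) (h : ∃ ℓ, HasRayElem c I u ℓ) {ℓ : ℤ}
    (hℓ : DistRel c u (arrow c I u) ℓ) : |ℓ| = rayLength c I u := by
  rw [hℓ.unique hc (distRel_arrow h).symm, abs_neg, Nat.abs_cast]

theorem hasRayElem_neg_arrow (h : ∃ ℓ, HasRayElem c I u ℓ) :
    HasRayElem (-c) I (arrow c I u) (rayLength c I u) := by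
  obtain ⟨v, hv, -, hsupp, z, hz, hzu⟩ := exists_hasRayElem_endpoint h
  rw [arrow_eq_of_distRel hzu]
  refine ⟨v, hv, mem_support_iff.1 hz, fun x hx => ?_⟩
  obtain ⟨j, hj, hxu⟩ := hsupp x hx
  refine ⟨rayLength c I u - j, Nat.sub_le _ _, distRel_neg_iff.2 ?_⟩
  rw [Nat.cast_sub hj, neg_sub]
  exact hxu.sub hzu

theorem rayLength_le_of_hasRayElem_neg (hc : c ≠ 0) (h : ∃ ℓ, HasRayElem c I u ℓ) {t : ℕ}
    (ht : HasRayElem (-c) I (arrow c I u) t) : rayLength c I u ≤ t := by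
  -- otherwise eliminating `x^z` between the two witnesses gives a shorter witness at `u`
  by_contra! htL
  obtain ⟨v, hv, hu, hsupp, z, hz, hzu⟩ := exists_hasRayElem_endpoint h
  rw [arrow_eq_of_distRel hzu] at ht
  obtain ⟨v', hv', hz', hsupp'⟩ := ht
  have hu' : coeff u v' = 0 := by
    by_contra hu'
    obtain ⟨j, hj, huz⟩ := hsupp' u (mem_support_iff.2 hu')
    have := (distRel_neg_iff.1 huz).unique hc hzu.symm
    omega
  obtain ⟨w, hw, hwz, hwv, hwsupp⟩ := exists_sub_mem_coeff_eq_zero hv hv' hz'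
  have : rayLength c I u ≤ rayLength c I u - 1 :=
    rayLength_le ⟨w, hw, hwv u hu' ▸ hu, fun x hx => ?_⟩
  · omega
  have hxz : x ≠ z := fun hxz => mem_support_iff.1 hx (hxz ▸ hwz)
  rcases hwsupp x hx with hx | hx
  · obtain ⟨j, hj, hxu⟩ := hsupp x hx
    have hjL : j ≠ rayLength c I u := fun hjL => hxz (hxu.left_unique (hjL ▸ hzu))
    exact ⟨j, by omega, hxu⟩
  · obtain ⟨j, hj, hxz'⟩ := hsupp' x hx
    have hxz' := distRel_neg_iff.1 hxz'
    have hj0 : j ≠ 0 := by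
      rintro rfl
      exact hxz (distRel_zero_iff.1 (by simpa using hxz'))
    refine ⟨rayLength c I u - j, by omega, ?_⟩
    rw [Nat.cast_sub (by omega), sub_eq_neg_add]
    exact hxz'.trans hzu

theorem rayLength_neg_arrow (hc : c ≠ 0) (h : ∃ ℓ, HasRayElem c I u ℓ) :
    rayLength (-c) I (arrow c I u) = rayLength c I u :=
  le_antisymm (rayLength_le (hasRayElem_neg_arrow h))
    (rayLength_le_of_hasRayElem_neg hc h (hasRayElem_rayLength ⟨_, hasRayElem_neg_arrow h⟩))

theorem arrow_neg_arrow (hc : c ≠ 0) (h : ∃ ℓ, HasRayElem c I u ℓ) :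
    arrow (-c) I (arrow c I u) = u := by
  refine arrow_eq_of_distRel ?_
  rw [rayLength_neg_arrow hc h, distRel_neg_iff]
  exact (distRel_arrow h).symm

end Arrow

theorem bijOn_arrow {n : ℕ} {K : Type*} [Field K] {c : Fin n → ℤ}
    {lt lt' : (Fin n →₀ ℕ) → (Fin n →₀ ℕ) → Prop} {I : Ideal (MvPolynomial (Fin n) K)}
    (hcp : cpos c ≠ 0) (hcn : cneg c ≠ 0) (hlt : IsTermOrder n lt) (hlt' : IsTermOrder n lt')
    (hlo : lt (cpos c) (cneg c)) (hlo' : lt' (cneg c) (cpos c)) (hI : CHomIdeal c I) :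
    Set.BijOn (arrow c I) (Mon (initialIdeal lt I)) (Mon (initialIdeal lt' I)) := by
  have hex : ∀ u ∈ Mon (initialIdeal lt I), ∃ ℓ, HasRayElem c I u ℓ :=
    fun u hu => exists_hasRayElem hlt hlo hI hcn hu
  have hex' : ∀ z ∈ Mon (initialIdeal lt' I), ∃ ℓ, HasRayElem (-c) I z ℓ :=
    fun z hz => exists_hasRayElem hlt' (by rwa [cpos_neg, cneg_neg]) hI.neg
      (by rwa [cneg_neg]) hz
  have hc : c ≠ 0 := ne_zero_of_cneg_ne_zero hcn
  refine Set.InvOn.bijOn (f' := arrow (-c) I)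
    ⟨fun u hu => arrow_neg_arrow hc (hex u hu), fun z hz => ?_⟩
    (fun u hu => arrow_mem_Mon_initialIdeal hlt' hlo' (hex u hu))
    (fun z hz => arrow_mem_Mon_initialIdeal hlt (by rwa [cpos_neg, cneg_neg]) (hex' z hz))
  simpa only [neg_neg] using arrow_neg_arrow (neg_ne_zero.2 hc) (hex' z hz)

/-- If `I` is homogeneous for a positive `ℤⁿ/ℤc`-grading and
`M = in_≺(I)`, `N = in_≺'(I)` for term orders with `x^{c⁺} ≺ x^{c⁻}` and
`x^{c⁺} ≻' x^{c⁻}`, then there is an arrow map `f : Mon M → Mon N` with respect to the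
`ℤⁿ/ℤc`-grading and `≺`. -/
theorem arrow_map_of_initial_ideals {n : ℕ} {K : Type*} [Field K] (c : Fin n → ℤ)
    (hcp : cpos c ≠ 0) (hcn : cneg c ≠ 0)
    (lt lt' : (Fin n →₀ ℕ) → (Fin n →₀ ℕ) → Prop)
    (hlt : IsTermOrder n lt) (hlt' : IsTermOrder n lt')
    (hlo : lt (cpos c) (cneg c)) (hlo' : lt' (cneg c) (cpos c))
    (I : Ideal (MvPolynomial (Fin n) K)) (hI : CHomIdeal c I)
    (M N : Ideal (MvPolynomial (Fin n) K))
    (hM : M = initialIdeal lt I) (hN : N = initialIdeal lt' I) :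
    ∃ f : (Fin n →₀ ℕ) → (Fin n →₀ ℕ), IsArrowMap c lt M N f := by
  subst hM hN
  have hc : c ≠ 0 := ne_zero_of_cneg_ne_zero hcn
  have hex : ∀ u ∈ Mon (initialIdeal lt I), ∃ ℓ, HasRayElem c I u ℓ :=
    fun u hu => exists_hasRayElem hlt hlo hI hcn hu
  refine ⟨arrow c I, bijOn_arrow hcp hcn hlt hlt' hlo hlo' hI,
    fun u hu => ⟨_, (distRel_arrow (hex u hu)).symm⟩,
    fun u hu => arrow_eq_or_lt hlt hlo (hex u hu),
    fun u hu w ℓ ℓ' hℓ hℓ' => ?_, fun u hu u' hu' w ℓ ℓ' hw hℓ hℓ' => ?_⟩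
  · rw [abs_eq_rayLength hc (hex u hu) hℓ, abs_eq_rayLength hc (hex _ (add_mem_Mon hu w)) hℓ']
    exact_mod_cast rayLength_add_le (hex u hu) w
  · rw [abs_eq_rayLength hc (hex u hu) hℓ, abs_eq_rayLength hc (hex u' hu') hℓ',
      ← rayLength_neg_arrow hc (hex u hu), ← rayLength_neg_arrow hc (hex u' hu'), hw]
    exact_mod_cast rayLength_add_le ⟨_, hasRayElem_neg_arrow (hex u hu)⟩ w
end

section
/- Let K be a field, let r₁,…,rₙ ≥ 1 be integers, let Q = ⟨x₁^{r₁},…,xₙ^{rₙ}⟩ ⊆ S = K[x₁,…,xₙ], and let I be an ideal of S with Q ⊆ I. Then S/Q, S/I and S/(Q : I) are finite-dimensional K-vector spaces and dim_K S/(Q : I) = dim_K S/Q − dim_K S/I. -/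
/-!
The coefficient of the socle monomial `x^(r - 1)` is a linear functional `φ` on `A = S/Q`
for which the form `(a, b) ↦ φ (a * b)` is nondegenerate (`A` is a Frobenius algebra).
For such a form the orthogonal of an ideal `J` is its annihilator, so
`dim (ann J) = dim A - dim J`, i.e. `dim A/(ann J) + dim A/J = dim A`. Taking for `J` the
image of `I` in `A`, its annihilator is the image of `Q : I`. Finite-dimensionality holds because
`A` is generated by the nilpotent images of the variables.
-/

open MvPolynomial

section Frobenius

variable {K A : Type*} [Field K] [CommRing A] [Algebra K A]

theorem Ideal.finrank_quotient_add_finrank_restrictScalars [FiniteDimensional K A] (J : Ideal A) :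
    Module.finrank K (A ⧸ J) + Module.finrank K (J.restrictScalars K) = Module.finrank K A := by
  rw [← (Submodule.Quotient.restrictScalarsEquiv K J).finrank_eq]
  exact Submodule.finrank_quotient_add_finrank _

noncomputable def frobeniusForm (φ : A →ₗ[K] K) : LinearMap.BilinForm K A :=
  (LinearMap.mul K A).compr₂ φ

@[simp]
theorem frobeniusForm_apply (φ : A →ₗ[K] K) (a b : A) : frobeniusForm φ a b = φ (a * b) := rfl

theorem frobeniusForm_isRefl (φ : A →ₗ[K] K) : (frobeniusForm φ).IsRefl := fun a b h => by
  rwa [frobeniusForm_apply, mul_comm] at h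

theorem frobeniusForm_nondegenerate_iff (φ : A →ₗ[K] K) :
    (frobeniusForm φ).Nondegenerate ↔ ∀ a, (∀ b, φ (a * b) = 0) → a = 0 :=
  (frobeniusForm_isRefl φ).nondegenerate_iff_separatingLeft

theorem orthogonal_frobeniusForm_eq_annihilator {φ : A →ₗ[K] K}
    (hφ : (frobeniusForm φ).Nondegenerate) (J : Ideal A) :
    (frobeniusForm φ).orthogonal (J.restrictScalars K) = J.annihilator.restrictScalars K := by
  ext a
  simp only [LinearMap.BilinForm.mem_orthogonal_iff, Submodule.restrictScalars_mem,
    Submodule.mem_annihilator, smul_eq_mul, frobeniusForm_apply]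
  refine ⟨fun h x hx => (frobeniusForm_nondegenerate_iff φ).mp hφ _ fun c => ?_,
    fun h x hx => by rw [mul_comm, h x hx, map_zero]⟩
  rw [show a * x * c = x * c * a by ring]
  exact h _ (J.mul_mem_right c hx)

theorem finrank_quotient_annihilator_add_finrank_quotient [FiniteDimensional K A]
    {φ : A →ₗ[K] K} (hφ : (frobeniusForm φ).Nondegenerate) (J : Ideal A) :
    Module.finrank K (A ⧸ J.annihilator) + Module.finrank K (A ⧸ J) = Module.finrank K A := by
  have hann := (frobeniusForm φ).finrank_orthogonal hφ (J.restrictScalars K)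
  rw [orthogonal_frobeniusForm_eq_annihilator hφ] at hann
  have hJ := J.finrank_quotient_add_finrank_restrictScalars (K := K)
  have hJann := J.annihilator.finrank_quotient_add_finrank_restrictScalars (K := K)
  have hJle : Module.finrank K (J.restrictScalars K) ≤ Module.finrank K A := Submodule.finrank_le _
  omega

end Frobenius

namespace Ideal

variable {S : Type*} [CommRing S]

theorem map_colon_eq_annihilator_map (Q I : Ideal S) :
    (Q.colon I).map (Quotient.mk Q) = (I.map (Quotient.mk Q)).annihilator := by
  have hcomap : (I.map (Quotient.mk Q)).annihilator.comap (Quotient.mk Q) = Q.colon I := by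
    ext f
    simp only [mem_comap, Submodule.mem_annihilator, Submodule.mem_colon, smul_eq_mul]
    constructor
    · intro h g hg
      rw [← Quotient.eq_zero_iff_mem, map_mul]
      exact h _ (mem_map_of_mem _ hg)
    · intro h a ha
      obtain ⟨g, hg, rfl⟩ := (mem_map_iff_of_surjective _ Quotient.mk_surjective).mp ha
      rw [← map_mul, Quotient.eq_zero_iff_mem]
      exact h g hg
  rw [← hcomap, map_comap_of_surjective _ Quotient.mk_surjective]

variable {K : Type*} [Field K] [Algebra K S]

theorem finiteDimensional_quotient_of_le {Q I : Ideal S} (hQI : Q ≤ I)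
    [FiniteDimensional K (S ⧸ Q)] : FiniteDimensional K (S ⧸ I) :=
  Module.Finite.of_surjective (Quotient.factorₐ K hQI).toLinearMap (Quotient.factor_surjective hQI)

theorem finrank_quotient_colon_add_finrank_quotient {Q I : Ideal S} (hQI : Q ≤ I)
    [FiniteDimensional K (S ⧸ Q)] {φ : (S ⧸ Q) →ₗ[K] K} (hφ : (frobeniusForm φ).Nondegenerate) :
    Module.finrank K (S ⧸ Q.colon I) + Module.finrank K (S ⧸ I) = Module.finrank K (S ⧸ Q) := by
  have hI := (DoubleQuot.quotQuotEquivQuotOfLEₐ K hQI).toLinearEquiv.finrank_eq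
  have hcolon :=
    (DoubleQuot.quotQuotEquivQuotOfLEₐ K (le_colon (I := Q) (S := I))).toLinearEquiv.finrank_eq
  have hmk : map (Quotient.mkₐ K Q) = map (Quotient.mk Q) := rfl
  rw [hmk] at hI hcolon
  rw [map_colon_eq_annihilator_map] at hcolon
  rw [← hI, ← hcolon]
  exact finrank_quotient_annihilator_add_finrank_quotient hφ _

end Ideal

namespace MvPolynomial

variable (R : Type*) [CommSemiring R] {σ : Type*}

noncomputable def purePowerIdeal (r : σ → ℕ) : Ideal (MvPolynomial σ R) :=
  Ideal.span (Set.range fun i => monomial (Finsupp.single i (r i)) 1)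

variable {R}

theorem mem_purePowerIdeal_iff {r : σ → ℕ} {f : MvPolynomial σ R} :
    f ∈ purePowerIdeal R r ↔ ∀ b ∈ f.support, ∃ i, r i ≤ b i := by
  rw [purePowerIdeal,
    Set.range_comp' (fun s => monomial s (1 : R)) fun i => Finsupp.single i (r i),
    mem_ideal_span_monomial_image]
  simp only [Set.exists_range_iff, Finsupp.single_le_iff]

theorem X_pow_mem_purePowerIdeal (r : σ → ℕ) (i : σ) : X i ^ r i ∈ purePowerIdeal R r :=
  Ideal.subset_span ⟨i, (X_pow_eq_monomial).symm⟩

variable [Finite σ]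

noncomputable def socleExponent (r : σ → ℕ) : σ →₀ ℕ :=
  Finsupp.equivFunOnFinite.symm fun i => r i - 1

@[simp]
theorem socleExponent_apply (r : σ → ℕ) (i : σ) : socleExponent r i = r i - 1 := rfl

theorem coeff_socleExponent_eq_zero_of_mem {r : σ → ℕ} (hr : ∀ i, 1 ≤ r i) {f : MvPolynomial σ R}
    (hf : f ∈ purePowerIdeal R r) : coeff (socleExponent r) f = 0 := by
  by_contra h
  obtain ⟨i, hi⟩ := mem_purePowerIdeal_iff.mp hf _ (mem_support_iff.mpr h)
  have := hr i
  rw [socleExponent_apply] at hi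
  omega

variable {K : Type*} [Field K]

noncomputable def socleFunctional {r : σ → ℕ} (hr : ∀ i, 1 ≤ r i) :
    (MvPolynomial σ K ⧸ purePowerIdeal K r) →ₗ[K] K :=
  ((purePowerIdeal K r).restrictScalars K).liftQ (lcoeff K (socleExponent r))
      (fun _ hf => coeff_socleExponent_eq_zero_of_mem hr hf) ∘ₗ
    (Submodule.Quotient.restrictScalarsEquiv K _).symm.toLinearMap

@[simp]
theorem socleFunctional_mk {r : σ → ℕ} (hr : ∀ i, 1 ≤ r i) (f : MvPolynomial σ K) :
    socleFunctional hr (Ideal.Quotient.mk _ f) = coeff (socleExponent r) f := rfl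

theorem frobeniusForm_socleFunctional_nondegenerate {r : σ → ℕ} (hr : ∀ i, 1 ≤ r i) :
    (frobeniusForm (socleFunctional (K := K) hr)).Nondegenerate := by
  rw [frobeniusForm_nondegenerate_iff]
  intro a ha
  obtain ⟨f, rfl⟩ := Ideal.Quotient.mk_surjective a
  rw [Ideal.Quotient.eq_zero_iff_mem]
  by_contra hf
  obtain ⟨b, hb, hbox⟩ : ∃ b ∈ f.support, ∀ i, b i < r i := by
    simpa [mem_purePowerIdeal_iff] using hf
  have hbd : b ≤ socleExponent r := fun i => by
    have := hbox i
    rw [socleExponent_apply]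
    omega
  -- multiplying by `x^(d - b)` moves the term `x^b` of `f` onto the socle monomial `x^d`
  have := ha (Ideal.Quotient.mk _ (monomial (socleExponent r - b) 1))
  rw [← map_mul, socleFunctional_mk, coeff_mul_monomial', if_pos tsub_le_self, mul_one,
    tsub_tsub_cancel_of_le hbd] at this
  exact mem_support_iff.mp hb this

instance finiteDimensional_quotient_purePowerIdeal (r : σ → ℕ) :
    FiniteDimensional K (MvPolynomial σ K ⧸ purePowerIdeal K r) := by
  set Q := purePowerIdeal K r
  have hX : ∀ i, IsIntegral K (Ideal.Quotient.mkₐ K Q (X i)) := fun i =>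
    ⟨Polynomial.X ^ r i, Polynomial.monic_X_pow _, by
      rw [Polynomial.eval₂_X_pow, ← map_pow]
      exact Ideal.Quotient.eq_zero_iff_mem.mpr (X_pow_mem_purePowerIdeal r i)⟩
  have htop : Algebra.adjoin K (Set.range fun i => Ideal.Quotient.mkₐ K Q (X i)) = ⊤ := by
    rw [Set.range_comp' (Ideal.Quotient.mkₐ K Q) X, Algebra.adjoin_image, adjoin_range_X,
      Algebra.map_top, AlgHom.range_eq_top]
    exact Ideal.Quotient.mkₐ_surjective K Q
  refine ⟨?_⟩
  rw [← Algebra.top_toSubmodule, ← htop]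
  exact fg_adjoin_of_finite (Set.finite_range _) (Set.forall_mem_range.mpr hX)

end MvPolynomial

/-- If `Q = ⟨x₁^{r₁},…,xₙ^{rₙ}⟩ ⊆ I` (with all `rᵢ ≥ 1`) in
`S = K[x₁,…,xₙ]`, then `S/Q`, `S/I` and `S/(Q : I)` are finite-dimensional `K`-vector
spaces and `dim_K S/(Q : I) = dim_K S/Q − dim_K S/I` (stated additively). -/
theorem finrank_quotient_colon {n : ℕ} {K : Type*} [Field K]
    (r : Fin n → ℕ) (hr : ∀ i, 1 ≤ r i)
    (Q : Ideal (MvPolynomial (Fin n) K))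
    (hQ : Q = Ideal.span (Set.range fun i : Fin n =>
      monomial (Finsupp.single i (r i)) (1 : K)))
    (I : Ideal (MvPolynomial (Fin n) K)) (hQI : Q ≤ I) :
    FiniteDimensional K (MvPolynomial (Fin n) K ⧸ Q) ∧
    FiniteDimensional K (MvPolynomial (Fin n) K ⧸ I) ∧
    FiniteDimensional K (MvPolynomial (Fin n) K ⧸ Q.colon I) ∧
    Module.finrank K (MvPolynomial (Fin n) K ⧸ Q.colon I) +
        Module.finrank K (MvPolynomial (Fin n) K ⧸ I) =
      Module.finrank K (MvPolynomial (Fin n) K ⧸ Q) := by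
  obtain rfl : Q = purePowerIdeal K r := hQ
  exact ⟨inferInstance, Ideal.finiteDimensional_quotient_of_le hQI,
    Ideal.finiteDimensional_quotient_of_le Ideal.le_colon,
    Ideal.finrank_quotient_colon_add_finrank_quotient hQI
      (frobeniusForm_socleFunctional_nondegenerate hr)⟩
end

section
/- Let K be a field and c ∈ ℕⁿ. Let f ∈ S = K[x₁,…,xₙ] be nonzero and homogeneous with respect to the ℤⁿ/ℤc-grading, written f = Σ_{i=0}^{s} λ_i x^{u+ic} with λ₀ ≠ 0 and λ_s ≠ 0. Then in_≺(f) = x^{u+sc} for every term order ≺. Consequently, for an ideal I homogeneous with respect to this grading, the initial ideal in_≺(I) is the same for all term orders ≺. -/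
open MvPolynomial

/-!
For `c ∈ ℕⁿ`, two exponents of the same degree differ by `ℓ • c` with `ℓ ∈ ℤ`, so one of the two
monomials divides the other: the support of a homogeneous polynomial is a chain for divisibility.
Every term order refines divisibility, so it picks the divisibility-largest monomial of such a
polynomial, whatever the order. For a homogeneous ideal `I` and `f ∈ I`, the homogeneous component
of `f` through `in_≺₁(f)` again lies in `I` and has the same `≺₁`-leading monomial, which is then
also its `≺₂`-leading monomial; hence `in_≺₁(I) ⊆ in_≺₂(I)`.
-/

section LeadingExponent

variable {n : ℕ} {K : Type*} [Field K] {lt : (Fin n →₀ ℕ) → (Fin n →₀ ℕ) → Prop}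
  {f : MvPolynomial (Fin n) K} {u w : Fin n →₀ ℕ}

theorem IsTermOrder.lt_of_lt (h : IsTermOrder n lt) (huw : u < w) : lt u w := by
  obtain ⟨m, rfl⟩ := exists_add_of_le huw.le
  have hm : m ≠ 0 := by rintro rfl; simp at huw
  have := h.2.2.2.2 0 m u (h.2.2.2.1 m hm)
  rwa [zero_add, add_comm] at this

theorem IsTermOrder.not_lt_of_le (h : IsTermOrder n lt) (huw : u ≤ w) : ¬ lt w u := by
  intro hwu
  rcases huw.eq_or_lt with rfl | huw
  · exact h.2.2.1 u hwu
  · exact h.2.2.1 u (h.2.1 _ _ _ (h.lt_of_lt huw) hwu)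

theorem IsTermOrder.isLeadExp_of_forall_le (h : IsTermOrder n lt) (hu : u ∈ f.support)
    (hle : ∀ w ∈ f.support, w ≤ u) : IsLeadExp lt f u :=
  ⟨hu, fun w hw hwu => h.lt_of_lt ((hle w hw).lt_of_ne hwu)⟩

theorem IsLeadExp.forall_le (hu : IsLeadExp lt f u) (h : IsTermOrder n lt)
    (hchain : ∀ w ∈ f.support, u ≤ w ∨ w ≤ u) : ∀ w ∈ f.support, w ≤ u := by
  intro w hw
  rcases eq_or_ne w u with rfl | hwu
  · exact le_rfl
  · exact (hchain w hw).resolve_left fun huw => h.not_lt_of_le huw (hu.2 w hw hwu)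

theorem IsLeadExp.weightedHomogeneousComponent {M : Type*} [AddCommMonoid M] (ω : Fin n → M)
    (hu : IsLeadExp lt f u) :
    IsLeadExp lt (weightedHomogeneousComponent ω (Finsupp.weight ω u) f) u := by
  classical
  simp only [IsLeadExp, support_weightedHomogeneousComponent, Finset.mem_filter]
  exact ⟨⟨hu.1, trivial⟩, fun w hw => hu.2 w hw.1⟩

end LeadingExponent

section Grading

variable {n : ℕ} {K : Type*} [Field K]

/-- The `ℤⁿ/ℤc`-grading of `S` as a weighted grading: `deg xᵢ = eᵢ + ℤc`. -/
noncomputable def cWeight (c : Fin n → ℤ) : Fin n → (Fin n → ℤ) ⧸ AddSubgroup.zmultiples c :=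
  fun i => QuotientAddGroup.mk (Pi.single i 1)

theorem weight_cWeight (c : Fin n → ℤ) (u : Fin n →₀ ℕ) :
    Finsupp.weight (cWeight c) u = QuotientAddGroup.mk (fun i => (u i : ℤ)) := by
  rw [Finsupp.weight_eq_sum, ← Finset.univ_sum_single (fun i => (u i : ℤ)), QuotientAddGroup.mk_sum]
  refine Finset.sum_congr rfl fun i _ => ?_
  rw [cWeight, ← QuotientAddGroup.mk_nsmul, ← Pi.single_smul, nsmul_eq_mul, mul_one]

theorem sameDeg_iff_weight_eq {c : Fin n → ℤ} {u v : Fin n →₀ ℕ} :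
    SameDeg c u v ↔ Finsupp.weight (cWeight c) u = Finsupp.weight (cWeight c) v := by
  rw [weight_cWeight, weight_cWeight, QuotientAddGroup.eq, AddSubgroup.mem_zmultiples_iff]
  refine ⟨fun ⟨ℓ, hℓ⟩ => ⟨-ℓ, funext fun i => ?_⟩, fun ⟨k, hk⟩ => ⟨-k, fun i => ?_⟩⟩
  · simp only [Pi.smul_apply, Pi.add_apply, Pi.neg_apply, smul_eq_mul]
    linarith [hℓ i]
  · have := congr_fun hk i
    simp only [Pi.smul_apply, Pi.add_apply, Pi.neg_apply, smul_eq_mul] at this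
    linarith

theorem CHom.isHomogeneousElem {c : Fin n → ℤ} {f : MvPolynomial (Fin n) K} (hf : CHom c f) :
    SetLike.IsHomogeneousElem (weightedHomogeneousSubmodule K (cWeight c)) f := by
  rcases f.support.eq_empty_or_nonempty with h | ⟨u, hu⟩
  · exact ⟨0, by simp [support_eq_empty.mp h]⟩
  · refine ⟨Finsupp.weight (cWeight c) u, fun w hw => ?_⟩
    exact sameDeg_iff_weight_eq.mp (hf w (mem_support_iff.mpr hw) u hu)

theorem CHomIdeal.weightedHomogeneousComponent_mem {c : Fin n → ℤ}
    {I : Ideal (MvPolynomial (Fin n) K)} (hI : CHomIdeal c I) {f : MvPolynomial (Fin n) K}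
    (hf : f ∈ I) (m : (Fin n → ℤ) ⧸ AddSubgroup.zmultiples c) :
    weightedHomogeneousComponent (cWeight c) m f ∈ I := by
  classical
  let := weightedGradedAlgebra K (cWeight c)
  obtain ⟨G, hG, rfl⟩ := hI
  exact weightedHomogeneousComponent_mem_of_mem K _
    (Ideal.homogeneous_span _ G fun g hg => (hG g hg).isHomogeneousElem) hf m

end Grading

section NonnegGrading

variable {n : ℕ} {K : Type*} [Field K] {c : Fin n → ℕ}

theorem SameDeg.le_or_le {u v : Fin n →₀ ℕ} (h : SameDeg (fun i => (c i : ℤ)) u v) :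
    u ≤ v ∨ v ≤ u := by
  obtain ⟨ℓ, hℓ⟩ := h
  have hdiff (i : Fin n) : (u i : ℤ) - v i = ℓ * c i := hℓ i
  rcases le_total 0 ℓ with hℓ0 | hℓ0
  · exact Or.inr fun i => by nlinarith [hdiff i, (c i).cast_nonneg (α := ℤ)]
  · exact Or.inl fun i => by nlinarith [hdiff i, (c i).cast_nonneg (α := ℤ)]

theorem initialIdeal_le_of_cHomIdeal {lt₁ lt₂ : (Fin n →₀ ℕ) → (Fin n →₀ ℕ) → Prop}
    (h₁ : IsTermOrder n lt₁) (h₂ : IsTermOrder n lt₂) {I : Ideal (MvPolynomial (Fin n) K)}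
    (hI : CHomIdeal (fun i => (c i : ℤ)) I) : initialIdeal lt₁ I ≤ initialIdeal lt₂ I := by
  classical
  refine Ideal.span_le.mpr ?_
  rintro _ ⟨f, hf, u, hu, rfl⟩
  set ω := cWeight fun i => (c i : ℤ)
  set g := weightedHomogeneousComponent ω (Finsupp.weight ω u) f
  have hchain : ∀ w ∈ g.support, u ≤ w ∨ w ≤ u := fun w hw => by
    rw [support_weightedHomogeneousComponent, Finset.mem_filter] at hw
    exact (sameDeg_iff_weight_eq.mpr hw.2.symm).le_or_le
  have hu₁ : IsLeadExp lt₁ g u := hu.weightedHomogeneousComponent ω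
  have hu₂ : IsLeadExp lt₂ g u := h₂.isLeadExp_of_forall_le hu₁.1 (hu₁.forall_le h₁ hchain)
  exact Ideal.subset_span ⟨g, hI.weightedHomogeneousComponent_mem hf _, u, hu₂, rfl⟩

end NonnegGrading

section SumMonomial

variable {σ R ι : Type*} [CommSemiring R] (t : Finset ι) (v : ι → σ →₀ ℕ) (a : ι → R)

theorem support_sum_monomial_subset_image [DecidableEq σ] :
    (∑ i ∈ t, monomial (v i) (a i)).support ⊆ t.image v := by
  intro w hw
  obtain ⟨i, hi, hw⟩ := Finset.mem_biUnion.mp (support_sum hw)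
  exact Finset.mem_image.mpr ⟨i, hi, (Finset.mem_singleton.mp (support_monomial_subset hw)).symm⟩

theorem coeff_sum_monomial_of_injOn {i : ι} (hv : Set.InjOn v t) (hi : i ∈ t) :
    coeff (v i) (∑ k ∈ t, monomial (v k) (a k)) = a i := by
  classical
  rw [coeff_sum, Finset.sum_eq_single_of_mem i hi fun k hk hki => ?_, coeff_monomial, if_pos rfl]
  rw [coeff_monomial, if_neg fun h => hki (hv hk hi h)]

end SumMonomial

section ArithmeticProgression

variable {n : ℕ} {R : Type*} [CommSemiring R] {c : Fin n → ℕ} {s : ℕ} {v : ℕ → (Fin n →₀ ℕ)}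

theorem le_of_arithProg (hv : ∀ i ≤ s, ∀ j : Fin n, v i j = v 0 j + i * c j) {i : ℕ}
    (hi : i ≤ s) : v i ≤ v s := fun j => by
  rw [hv i hi j, hv s le_rfl j]
  gcongr

theorem injOn_of_arithProg (hv : ∀ i ≤ s, ∀ j : Fin n, v i j = v 0 j + i * c j) {j : Fin n}
    (hc : c j ≠ 0) : Set.InjOn v (Finset.range (s + 1)) := fun i hi k hk hik => by
  have := congr($hik j)
  rw [hv i (Finset.mem_range_succ_iff.mp hi) j, hv k (Finset.mem_range_succ_iff.mp hk) j] at this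
  exact Nat.eq_of_mul_eq_mul_right (Nat.pos_of_ne_zero hc) (Nat.add_left_cancel this)

theorem mem_support_sum_monomial_of_arithProg
    (hv : ∀ i ≤ s, ∀ j : Fin n, v i j = v 0 j + i * c j) {lam : ℕ → R} (hs : lam s ≠ 0)
    (hf0 : ∑ i ∈ Finset.range (s + 1), monomial (v i) (lam i) ≠ 0) :
    v s ∈ (∑ i ∈ Finset.range (s + 1), monomial (v i) (lam i)).support := by
  by_cases hc : ∀ j, c j = 0
  · obtain ⟨w, hw⟩ := Finset.nonempty_of_ne_empty (mt support_eq_empty.mp hf0)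
    obtain ⟨i, hi, rfl⟩ := Finset.mem_image.mp (support_sum_monomial_subset_image _ _ _ hw)
    convert hw using 1
    ext j
    rw [hv i (Finset.mem_range_succ_iff.mp hi) j, hv s le_rfl j, hc j]
    simp
  · obtain ⟨j, hj⟩ := not_forall.mp hc
    rw [mem_support_iff, coeff_sum_monomial_of_injOn _ _ _ (injOn_of_arithProg hv hj)
      (Finset.self_mem_range_succ s)]
    exact hs

end ArithmeticProgression

theorem initial_of_cHomogeneous_nonneg_general {n : ℕ} {K : Type*} [Field K] (c : Fin n → ℕ)
    (s : ℕ) (lam : ℕ → K) (v : ℕ → (Fin n →₀ ℕ))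
    (hv : ∀ i ≤ s, ∀ j : Fin n, v i j = v 0 j + i * c j)
    (hs : lam s ≠ 0)
    (f : MvPolynomial (Fin n) K)
    (hf : f = ∑ i ∈ Finset.range (s + 1), monomial (v i) (lam i)) (hf0 : f ≠ 0) :
    (∀ lt, IsTermOrder n lt → IsLeadExp lt f (v s)) ∧
    (∀ lt₁ lt₂, IsTermOrder n lt₁ → IsTermOrder n lt₂ →
      ∀ I : Ideal (MvPolynomial (Fin n) K), CHomIdeal (fun i => (c i : ℤ)) I →
        initialIdeal lt₁ I = initialIdeal lt₂ I) := by
  subst hf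
  constructor
  · intro lt hlt
    refine hlt.isLeadExp_of_forall_le (mem_support_sum_monomial_of_arithProg hv hs hf0)
      fun w hw => ?_
    obtain ⟨i, hi, rfl⟩ := Finset.mem_image.mp (support_sum_monomial_subset_image _ _ _ hw)
    exact le_of_arithProg hv (Finset.mem_range_succ_iff.mp hi)
  · intro lt₁ lt₂ h₁ h₂ I hI
    exact (initialIdeal_le_of_cHomIdeal h₁ h₂ hI).antisymm (initialIdeal_le_of_cHomIdeal h₂ h₁ hI)

/-- For `c ∈ ℕⁿ` (a non-positive grading), a nonzero
`ℤⁿ/ℤc`-homogeneous polynomial `f = Σ_{i=0}^{s} λ_i x^{u+ic}` (with `λ₀, λ_s ≠ 0`) has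
`in_≺(f) = x^{u+sc}` for *every* term order `≺`.  Consequently a homogeneous ideal has
the same initial ideal for all term orders. -/
theorem initial_of_cHomogeneous_nonneg {n : ℕ} {K : Type*} [Field K] (c : Fin n → ℕ)
    (s : ℕ) (lam : ℕ → K) (v : ℕ → (Fin n →₀ ℕ))
    (hv : ∀ i ≤ s, ∀ j : Fin n, v i j = v 0 j + i * c j)
    (h0 : lam 0 ≠ 0) (hs : lam s ≠ 0)
    (f : MvPolynomial (Fin n) K)
    (hf : f = ∑ i ∈ Finset.range (s + 1), monomial (v i) (lam i)) (hf0 : f ≠ 0) :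
    (∀ lt, IsTermOrder n lt → IsLeadExp lt f (v s)) ∧
    (∀ lt₁ lt₂, IsTermOrder n lt₁ → IsTermOrder n lt₂ →
      ∀ I : Ideal (MvPolynomial (Fin n) K), CHomIdeal (fun i => (c i : ℤ)) I →
        initialIdeal lt₁ I = initialIdeal lt₂ I) :=
  initial_of_cHomogeneous_nonneg_general c s lam v hv hs f hf hf0
end

section
/- Let K be a field and c ∈ ℕⁿ. If M and N are monomial ideals of S = K[x₁,…,xₙ] such that for every degree a ∈ ℤⁿ/ℤc the set of monomials of degree a not lying in M and the set of monomials of degree a not lying in N have the same cardinality, then M = N. In other words, for a grading by ℤⁿ/ℤc with c ∈ ℕⁿ, a monomial ideal is uniquely determined by its Hilbert function. -/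
open MvPolynomial

/-- A monomial ideal: an ideal generated by monomials. -/
def IsMonomialIdeal {n : ℕ} {K : Type*} [Field K] (M : Ideal (MvPolynomial (Fin n) K)) :
    Prop :=
  ∃ G : Set (Fin n →₀ ℕ), M = Ideal.span ((fun u => monomial u (1 : K)) '' G)

section Aux

open MvPolynomial

lemma mon_mem_iff {n : ℕ} {K : Type*} [Field K] {G : Set (Fin n →₀ ℕ)}
    {u : Fin n →₀ ℕ} :
    u ∈ Mon (Ideal.span ((fun u => monomial u (1 : K)) '' G)) ↔ ∃ g ∈ G, g ≤ u := by
  rw [Mon, Set.mem_setOf_eq, mem_ideal_span_monomial_image]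
  simp [support_monomial]

lemma mon_upward {n : ℕ} {K : Type*} [Field K] {M : Ideal (MvPolynomial (Fin n) K)}
    (hM : IsMonomialIdeal M) {u v : Fin n →₀ ℕ} (hu : u ∈ Mon M) (huv : u ≤ v) :
    v ∈ Mon M := by
  obtain ⟨G, rfl⟩ := hM
  rw [mon_mem_iff] at hu ⊢
  obtain ⟨g, hg, hgu⟩ := hu
  exact ⟨g, hg, hgu.trans huv⟩

lemma span_mon {n : ℕ} {K : Type*} [Field K] {M : Ideal (MvPolynomial (Fin n) K)}
    (hM : IsMonomialIdeal M) :
    M = Ideal.span ((fun u => monomial u (1 : K)) '' (Mon M)) := by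
  obtain ⟨G, rfl⟩ := hM
  apply le_antisymm
  · apply Ideal.span_le.2
    rintro p ⟨g, hg, rfl⟩
    exact Ideal.subset_span ⟨g, mon_mem_iff.2 ⟨g, hg, le_refl g⟩, rfl⟩
  · apply Ideal.span_le.2
    rintro p ⟨g, hg, rfl⟩
    exact hg

/-- core: standard-monomial count comparison forces membership transfer. -/
lemma mon_subset {n : ℕ} {K : Type*} [Field K] (c : Fin n → ℕ)
    (M N : Ideal (MvPolynomial (Fin n) K))
    (hM : IsMonomialIdeal M) (hN : IsMonomialIdeal N)
    (h : ∀ u : Fin n →₀ ℕ,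
      Cardinal.mk {v : Fin n →₀ ℕ // SameDeg (fun i => (c i : ℤ)) v u ∧ v ∉ Mon M} =
      Cardinal.mk {v : Fin n →₀ ℕ // SameDeg (fun i => (c i : ℤ)) v u ∧ v ∉ Mon N}) :
    Mon M ⊆ Mon N := by
  intro u huM
  by_contra huN
  by_cases hc : ∀ i, c i = 0
  · -- degree class of u is just {u}
    have hMempty : IsEmpty {v : Fin n →₀ ℕ // SameDeg (fun i => (c i : ℤ)) v u ∧ v ∉ Mon M} := by
      refine ⟨fun ⟨v, ⟨ℓ, hℓ⟩, hv⟩ => ?_⟩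
      have : v = u := by
        ext i
        have h' : (v i : ℤ) - u i = ℓ * (c i : ℤ) := hℓ i
        rw [hc i] at h'
        simp at h'
        omega
      exact hv (this ▸ huM)
    have hNne : Nonempty {v : Fin n →₀ ℕ // SameDeg (fun i => (c i : ℤ)) v u ∧ v ∉ Mon N} :=
      ⟨⟨u, ⟨0, fun i => by simp⟩, huN⟩⟩
    have h0 := h u
    rw [Cardinal.mk_eq_zero _] at h0
    exact (Cardinal.mk_ne_zero _) h0.symm
  · push_neg at hc
    obtain ⟨i₀, hi₀⟩ := hc
    -- the set of valid shifts
    set L : ℤ → Prop := fun ℓ => ∀ i, 0 ≤ (u i : ℤ) + ℓ * c i with hL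
    have hL0 : L 0 := fun i => by simp
    have hLbdd : ∃ b : ℤ, ∀ z, L z → b ≤ z := by
      refine ⟨-(u i₀ : ℤ), fun z hz => ?_⟩
      have := hz i₀
      rcases le_or_gt 0 z with hz0 | hz0
      · omega
      · have h1 : (1 : ℤ) ≤ c i₀ := by exact_mod_cast Nat.one_le_iff_ne_zero.2 hi₀
        nlinarith
    obtain ⟨ℓm, hℓm, hℓmle⟩ := Int.exists_least_of_bdd hLbdd ⟨0, hL0⟩
    have hℓm0 : ℓm ≤ 0 := hℓmle 0 hL0
    -- the monomial with shift ℓ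
    set φ : ℤ → (Fin n →₀ ℕ) := fun ℓ =>
      Finsupp.equivFunOnFinite.symm fun i => ((u i : ℤ) + ℓ * c i).toNat with hφ
    have hφapp : ∀ ℓ i, (φ ℓ) i = ((u i : ℤ) + ℓ * c i).toNat := fun ℓ i => rfl
    set k : ℕ := (-ℓm).toNat with hk
    -- injection from Icc ℓm 0 into standard monomials of N
    have h1 : (k + 1 : Cardinal) ≤
        Cardinal.mk {v : Fin n →₀ ℕ // SameDeg (fun i => (c i : ℤ)) v u ∧ v ∉ Mon N} := by
      have hcard : ((Finset.Icc ℓm 0).card : Cardinal) = (k + 1 : ℕ) := by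
        rw [Int.card_Icc]
        congr 1
        omega
      have : Cardinal.mk (Finset.Icc ℓm 0 : Finset ℤ) ≤
          Cardinal.mk {v : Fin n →₀ ℕ // SameDeg (fun i => (c i : ℤ)) v u ∧ v ∉ Mon N} := by
        refine Cardinal.mk_le_of_injective (f := fun ℓ => ⟨φ ℓ.1, ?_, ?_⟩) ?_
        · refine ⟨ℓ.1, fun i => ?_⟩
          have hℓmem := ℓ.2
          rw [Finset.mem_Icc] at hℓmem
          have hLℓ : L ℓ.1 := fun i => by
            have := hℓm i
            have hc0 : (0:ℤ) ≤ c i := Int.ofNat_nonneg _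
            nlinarith [hℓmem.1]
          rw [hφapp]
          rw [Int.toNat_of_nonneg (hLℓ i)]
          ring
        · intro hmem
          apply huN
          refine mon_upward hN hmem ?_
          rw [Finsupp.le_def]
          intro i
          rw [hφapp]
          have hc0 : (0:ℤ) ≤ c i := Int.ofNat_nonneg _
          have hℓmem := ℓ.2
          rw [Finset.mem_Icc] at hℓmem
          have : (u i : ℤ) + ℓ.1 * c i ≤ (u i : ℤ) := by nlinarith [hℓmem.2]
          omega
        · intro a b hab
          have hfab : φ a.1 = φ b.1 := congrArg Subtype.val hab
          have hLa : L a.1 := fun i => by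
            have := hℓm i
            have hc0 : (0:ℤ) ≤ c i := Int.ofNat_nonneg _
            have := (Finset.mem_Icc.1 a.2).1
            nlinarith
          have hLb : L b.1 := fun i => by
            have := hℓm i
            have hc0 : (0:ℤ) ≤ c i := Int.ofNat_nonneg _
            have := (Finset.mem_Icc.1 b.2).1
            nlinarith
          have h1 := congrArg (fun f => ((f i₀ : ℕ) : ℤ)) hfab
          simp only [hφapp] at h1
          rw [Int.toNat_of_nonneg (hLa i₀), Int.toNat_of_nonneg (hLb i₀)] at h1
          have hci₀ : (0:ℤ) < c i₀ := by exact_mod_cast Nat.pos_of_ne_zero hi₀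
          have : a.1 = b.1 := by
            have := mul_right_cancel₀ (ne_of_gt hci₀) (by linarith : a.1 * (c i₀:ℤ) = b.1 * c i₀)
            exact this
          exact Subtype.ext this
      calc (k + 1 : Cardinal) = ((Finset.Icc ℓm 0).card : Cardinal) := by
            rw [hcard]; push_cast; ring
        _ = Cardinal.mk (Finset.Icc ℓm 0 : Finset ℤ) := (Cardinal.mk_coe_finset).symm
        _ ≤ _ := this
    -- injection from standard monomials of M into Ico ℓm 0
    have h2 : Cardinal.mk {v : Fin n →₀ ℕ // SameDeg (fun i => (c i : ℤ)) v u ∧ v ∉ Mon M} ≤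
        (k : Cardinal) := by
      have : Cardinal.mk {v : Fin n →₀ ℕ // SameDeg (fun i => (c i : ℤ)) v u ∧ v ∉ Mon M} ≤
          Cardinal.mk (Finset.Ico ℓm 0 : Finset ℤ) := by
        refine Cardinal.mk_le_of_injective
          (f := fun v => ⟨v.2.1.choose, ?_⟩) ?_
        · have hspec := v.2.1.choose_spec
          set ℓ := v.2.1.choose
          rw [Finset.mem_Ico]
          constructor
          · apply hℓmle
            intro i
            have := hspec i
            have : (v.1 i : ℤ) = (u i : ℤ) + ℓ * c i := by linarith
            have h0 : (0:ℤ) ≤ (v.1 i : ℤ) := Int.ofNat_nonneg _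
            omega
          · by_contra hge
            push_neg at hge
            apply v.2.2
            refine mon_upward hM huM ?_
            rw [Finsupp.le_def]
            intro i
            have := hspec i
            have hc0 : (0:ℤ) ≤ c i := Int.ofNat_nonneg _
            have : (u i : ℤ) ≤ (v.1 i : ℤ) := by nlinarith
            omega
        · intro a b hab
          have hab' : a.2.1.choose = b.2.1.choose := congrArg Subtype.val hab
          have ha := a.2.1.choose_spec
          have hb := b.2.1.choose_spec
          apply Subtype.ext
          ext i
          have h1 := ha i
          have h2 := hb i
          rw [hab'] at h1
          omega
      calc _ ≤ Cardinal.mk (Finset.Ico ℓm 0 : Finset ℤ) := this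
        _ = ((Finset.Ico ℓm 0).card : Cardinal) := Cardinal.mk_coe_finset
        _ = (k : Cardinal) := by rw [Int.card_Ico]; congr 1; omega
    rw [h u] at h2
    have := h1.trans h2
    have : (k + 1 : ℕ) ≤ (k : ℕ) := by
      have h' : ((k+1 : ℕ) : Cardinal) ≤ ((k : ℕ) : Cardinal) := by push_cast; exact this
      exact_mod_cast h'
    omega

end Aux

/-- For a grading by `ℤⁿ/ℤc` with `c ∈ ℕⁿ`, a monomial ideal is
determined by its Hilbert function: if for every degree class (represented by an
exponent `u`) the standard monomials of `M` and of `N` in that degree are equinumerous,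
then `M = N`. -/
theorem monomialIdeal_eq_of_hilbert_eq {n : ℕ} {K : Type*} [Field K] (c : Fin n → ℕ)
    (M N : Ideal (MvPolynomial (Fin n) K))
    (hM : IsMonomialIdeal M) (hN : IsMonomialIdeal N)
    (h : ∀ u : Fin n →₀ ℕ,
      Cardinal.mk {v : Fin n →₀ ℕ // SameDeg (fun i => (c i : ℤ)) v u ∧ v ∉ Mon M} =
      Cardinal.mk {v : Fin n →₀ ℕ // SameDeg (fun i => (c i : ℤ)) v u ∧ v ∉ Mon N}) :
    M = N := by
  have h1 : Mon M ⊆ Mon N := mon_subset c M N hM hN h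
  have h2 : Mon N ⊆ Mon M := mon_subset c N M hN hM (fun u => (h u).symm)
  rw [span_mon hM, span_mon hN, Set.Subset.antisymm h1 h2]
end
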